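/- Let n ≥ 2 and R > 0. Then the function m ↦ m·λ_m(B_R) is nondecreasing and concave on (0, ∞), and lim_{m→0⁺} m·λ_m(B_R) = 0. -/

import Mathlib

open MeasureTheory Metric Set Filter
open scoped Topology

noncomputable section

/-- The Laplacian of `u : ℝⁿ → ℝ`, as the sum of second partial derivatives. -/
def lap {n : ℕ} (u : EuclideanSpace ℝ (Fin n) → ℝ) (x : EuclideanSpace ℝ (Fin n)) : ℝ :=
  ∑ i : Fin n, fderiv ℝ (fun y => fderiv ℝ u y (EuclideanSpace.single i 1)) x
    (EuclideanSpace.single i 1)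

/-- The (n-1)-dimensional Hausdorff (surface) measure on ℝⁿ. -/
def surf (n : ℕ) : Measure (EuclideanSpace ℝ (Fin n)) := μH[(n : ℝ) - 1]

/-- The outer normal derivative along the sphere of radius `R` centered at the origin:
the normal is `ν = x / R` at `x` on the sphere. -/
def normalDeriv {n : ℕ} (R : ℝ) (u : EuclideanSpace ℝ (Fin n) → ℝ)
    (x : EuclideanSpace ℝ (Fin n)) : ℝ :=
  inner ℝ (gradient u x) (R⁻¹ • x)

/-- The tangential gradient along the sphere of radius `R` centered at the origin,
computed from a globally defined `C¹` extension. -/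
def tGrad {n : ℕ} (R : ℝ) (ζ : EuclideanSpace ℝ (Fin n) → ℝ)
    (x : EuclideanSpace ℝ (Fin n)) : EuclideanSpace ℝ (Fin n) :=
  gradient ζ x - (inner ℝ (gradient ζ x) (R⁻¹ • x) : ℝ) • (R⁻¹ • x)

/-- The volume of the unit ball in ℝⁿ. -/
def omegaN (n : ℕ) : ℝ := (volume (Metric.ball (0 : EuclideanSpace ℝ (Fin n)) 1)).toReal

/-- The average of `f` over the ball of radius `R`. -/
def fbar (n : ℕ) (R : ℝ) (f : EuclideanSpace ℝ (Fin n) → ℝ) : ℝ :=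
  (∫ x in Metric.ball (0 : EuclideanSpace ℝ (Fin n)) R, f x) / (omegaN n * R ^ n)

/-- The energy shape functional `E_m(Ω)` with heat source `f`. -/
def Em (n : ℕ) (m : ℝ) (f : EuclideanSpace ℝ (Fin n) → ℝ)
    (Ω : Set (EuclideanSpace ℝ (Fin n))) : ℝ :=
  sInf { J : ℝ | ∃ u : EuclideanSpace ℝ (Fin n) → ℝ, ContDiffOn ℝ 1 u (closure Ω) ∧
    J = (1 / 2) * (∫ x in Ω, ‖gradient u x‖ ^ 2)
        + (1 / (2 * m)) * (∫ x in frontier Ω, |u x| ∂(surf n)) ^ 2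
        - ∫ x in Ω, f x * u x }

/-- The eigenvalue shape functional `λ_m(Ω)`. -/
def lambdam (n : ℕ) (m : ℝ) (Ω : Set (EuclideanSpace ℝ (Fin n))) : ℝ :=
  sInf { J : ℝ | ∃ u : EuclideanSpace ℝ (Fin n) → ℝ, ContDiffOn ℝ 1 u (closure Ω) ∧
    (¬ ∀ x ∈ closure Ω, u x = 0) ∧
    J = ((∫ x in Ω, ‖gradient u x‖ ^ 2) + (1 / m) * (∫ x in frontier Ω, |u x| ∂(surf n)) ^ 2)
        / ∫ x in Ω, (u x) ^ 2 }

/-- The first nonzero Neumann Laplacian eigenvalue `μ₂(Ω)`. -/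
def mu2 (n : ℕ) (Ω : Set (EuclideanSpace ℝ (Fin n))) : ℝ :=
  sInf { J : ℝ | ∃ u : EuclideanSpace ℝ (Fin n) → ℝ, ContDiffOn ℝ 1 u (closure Ω) ∧
    (¬ ∀ x ∈ closure Ω, u x = 0) ∧ (∫ x in Ω, u x) = 0 ∧
    J = (∫ x in Ω, ‖gradient u x‖ ^ 2) / ∫ x in Ω, (u x) ^ 2 }

/-- A volume-preserving flow of the ball of radius `R` centered at the origin,
generated by a compactly supported smooth vector field `η`. -/
structure VolFlow (n : ℕ) (R : ℝ) where
  ε : ℝ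
  εpos : 0 < ε
  η : EuclideanSpace ℝ (Fin n) → EuclideanSpace ℝ (Fin n)
  F : ℝ → EuclideanSpace ℝ (Fin n) → EuclideanSpace ℝ (Fin n)
  smooth : ContDiff ℝ (⊤ : ℕ∞) η
  cpt : HasCompactSupport η
  init : ∀ x, F 0 x = x
  flowDeriv : ∀ t ∈ Set.Ioo (-ε) ε, ∀ x, HasDerivAt (fun s => F s x) (η (F t x)) t
  volPres : ∀ t ∈ Set.Ioo (-ε) ε,
    volume (F t '' Metric.ball (0 : EuclideanSpace ℝ (Fin n)) R)
      = volume (Metric.ball (0 : EuclideanSpace ℝ (Fin n)) R)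

/-- `g` is twice differentiable at `0` with second derivative `D`:
`g` is differentiable near `0` and its derivative is differentiable at `0` with value `D`. -/
def HasSecondDerivAtZero (g : ℝ → ℝ) (D : ℝ) : Prop :=
  ∃ g' : ℝ → ℝ, (∀ᶠ t in 𝓝 (0 : ℝ), HasDerivAt g (g' t) t) ∧ HasDerivAt g' D 0

/-- The Bessel function of the first kind of real order `ν`. -/
def besselJ (ν : ℝ) (t : ℝ) : ℝ :=
  ∑' k : ℕ, ((-1 : ℝ) ^ k / ((Nat.factorial k : ℝ) * Real.Gamma ((k : ℝ) + ν + 1)))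
    * Real.rpow (t / 2) (2 * (k : ℝ) + ν)

namespace Stmt17Aux

/-- Set of values of `m * Rayleigh quotient`. -/
def TT (n : ℕ) (R m : ℝ) : Set ℝ :=
  { J : ℝ | ∃ u : EuclideanSpace ℝ (Fin n) → ℝ,
      ContDiffOn ℝ 1 u (closure (Metric.ball (0 : EuclideanSpace ℝ (Fin n)) R)) ∧
      (¬ ∀ x ∈ closure (Metric.ball (0 : EuclideanSpace ℝ (Fin n)) R), u x = 0) ∧
      J = (m * (∫ x in Metric.ball (0 : EuclideanSpace ℝ (Fin n)) R, ‖gradient u x‖ ^ 2)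
            + (∫ x in frontier (Metric.ball (0 : EuclideanSpace ℝ (Fin n)) R),
                |u x| ∂(surf n)) ^ 2)
          / ∫ x in Metric.ball (0 : EuclideanSpace ℝ (Fin n)) R, (u x) ^ 2 }

theorem TT_nonneg {n : ℕ} {R m : ℝ} (hm : 0 ≤ m) : ∀ J ∈ TT n R m, (0:ℝ) ≤ J := by
  rintro J ⟨u, -, -, rfl⟩
  have hA : (0:ℝ) ≤ ∫ x in Metric.ball (0 : EuclideanSpace ℝ (Fin n)) R, ‖gradient u x‖ ^ 2 :=
    integral_nonneg fun x => by positivity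
  have hC : (0:ℝ) ≤ ∫ x in Metric.ball (0 : EuclideanSpace ℝ (Fin n)) R, (u x) ^ 2 :=
    integral_nonneg fun x => sq_nonneg _
  exact div_nonneg (add_nonneg (mul_nonneg hm hA) (sq_nonneg _)) hC

theorem TT_bdd {n : ℕ} {R m : ℝ} (hm : 0 ≤ m) : BddBelow (TT n R m) :=
  ⟨0, fun J hJ => TT_nonneg hm J hJ⟩

theorem TT_nonempty {n : ℕ} {R : ℝ} (hR : 0 < R) (m : ℝ) : (TT n R m).Nonempty := by
  refine ⟨_, fun _ => (1:ℝ), contDiffOn_const, ?_, rfl⟩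
  intro h
  have := h 0 (subset_closure (mem_ball_self hR))
  norm_num at this

theorem helper {m : ℝ} (hm : m ≠ 0) (A B C : ℝ) :
    m * ((A + (1/m) * B) / C) = (m * A + B) / C := by
  rw [← mul_div_assoc]
  congr 1
  field_simp

theorem key {n : ℕ} {R m : ℝ} (hm : 0 < m) :
    m * lambdam n m (Metric.ball (0 : EuclideanSpace ℝ (Fin n)) R) = sInf (TT n R m) := by
  unfold lambdam
  rw [← smul_eq_mul, ← Real.sInf_smul_of_nonneg hm.le]
  congr 1
  ext J
  constructor
  · rintro ⟨x, ⟨u, h1, h2, rfl⟩, rfl⟩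
    refine ⟨u, h1, h2, ?_⟩
    simp only [smul_eq_mul]
    exact helper hm.ne' _ _ _
  · rintro ⟨u, h1, h2, rfl⟩
    refine ⟨_, ⟨u, h1, h2, rfl⟩, ?_⟩
    simp only [smul_eq_mul]
    exact helper hm.ne' _ _ _

theorem elt_mono {A B C m₁ m₂ : ℝ} (hA : 0 ≤ A) (hC : 0 ≤ C) (h : m₁ ≤ m₂) :
    (m₁ * A + B) / C ≤ (m₂ * A + B) / C := by
  rcases eq_or_lt_of_le hC with h0 | h0
  · simp [← h0]
  · exact (div_le_div_iff_of_pos_right h0).mpr (by nlinarith)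

end Stmt17Aux

theorem stmt_17 (n : ℕ) (hn : 2 ≤ n) (R : ℝ) (hR : 0 < R) :
    MonotoneOn
      (fun m : ℝ => m * lambdam n m (Metric.ball (0 : EuclideanSpace ℝ (Fin n)) R))
      (Set.Ioi 0) ∧
    ConcaveOn ℝ (Set.Ioi 0)
      (fun m : ℝ => m * lambdam n m (Metric.ball (0 : EuclideanSpace ℝ (Fin n)) R)) ∧
    Filter.Tendsto
      (fun m : ℝ => m * lambdam n m (Metric.ball (0 : EuclideanSpace ℝ (Fin n)) R))
      (𝓝[>] (0 : ℝ)) (𝓝 0) := by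
  refine ⟨?_, ⟨convex_Ioi 0, ?_⟩, ?_⟩
  · -- Monotone
    intro m₁ hm₁ m₂ hm₂ h12
    simp only
    rw [Stmt17Aux.key hm₁, Stmt17Aux.key hm₂]
    refine le_csInf (Stmt17Aux.TT_nonempty hR m₂) ?_
    rintro J ⟨u, h1, h2, rfl⟩
    have hA : (0:ℝ) ≤ ∫ x in Metric.ball (0 : EuclideanSpace ℝ (Fin n)) R, ‖gradient u x‖ ^ 2 :=
      integral_nonneg fun x => by positivity
    have hC : (0:ℝ) ≤ ∫ x in Metric.ball (0 : EuclideanSpace ℝ (Fin n)) R, (u x) ^ 2 :=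
      integral_nonneg fun x => sq_nonneg _
    calc sInf (Stmt17Aux.TT n R m₁)
        ≤ _ := csInf_le (Stmt17Aux.TT_bdd (le_of_lt hm₁)) ⟨u, h1, h2, rfl⟩
      _ ≤ _ := Stmt17Aux.elt_mono hA hC h12
  · -- Concave
    intro x hx y hy a b ha hb hab
    simp only [smul_eq_mul]
    have hxy : (0:ℝ) < a * x + b * y := by
      have := (convex_Ioi (0:ℝ)) hx hy ha hb hab
      simpa using this
    rw [Stmt17Aux.key hx, Stmt17Aux.key hy, Stmt17Aux.key hxy]
    refine le_csInf (Stmt17Aux.TT_nonempty hR _) ?_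
    rintro J ⟨u, h1, h2, rfl⟩
    set A := ∫ z in Metric.ball (0 : EuclideanSpace ℝ (Fin n)) R, ‖gradient u z‖ ^ 2 with hAdef
    set B := (∫ z in frontier (Metric.ball (0 : EuclideanSpace ℝ (Fin n)) R),
      |u z| ∂(surf n)) ^ 2 with hBdef
    set C := ∫ z in Metric.ball (0 : EuclideanSpace ℝ (Fin n)) R, (u z) ^ 2 with hCdef
    have e1 : sInf (Stmt17Aux.TT n R x) ≤ (x * A + B) / C :=
      csInf_le (Stmt17Aux.TT_bdd (le_of_lt hx)) ⟨u, h1, h2, rfl⟩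
    have e2 : sInf (Stmt17Aux.TT n R y) ≤ (y * A + B) / C :=
      csInf_le (Stmt17Aux.TT_bdd (le_of_lt hy)) ⟨u, h1, h2, rfl⟩
    have hnum : a * (x * A + B) + b * (y * A + B) = (a * x + b * y) * A + B := by
      linear_combination B * hab
    calc a * sInf (Stmt17Aux.TT n R x) + b * sInf (Stmt17Aux.TT n R y)
        ≤ a * ((x * A + B) / C) + b * ((y * A + B) / C) :=
          add_le_add (mul_le_mul_of_nonneg_left e1 ha) (mul_le_mul_of_nonneg_left e2 hb)
      _ = (a * (x * A + B) + b * (y * A + B)) / C := by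
          rw [mul_div_assoc', mul_div_assoc', ← add_div]
      _ = ((a * x + b * y) * A + B) / C := by rw [hnum]
  · -- Tendsto
    set c : ContDiffBump (0 : EuclideanSpace ℝ (Fin n)) :=
      { rIn := R / 2, rOut := R, rIn_pos := half_pos hR, rIn_lt_rOut := by linarith }
    have h1 : ContDiffOn ℝ 1 (⇑c)
        (closure (Metric.ball (0 : EuclideanSpace ℝ (Fin n)) R)) :=
      c.contDiff.contDiffOn
    have h2 : ¬ ∀ x ∈ closure (Metric.ball (0 : EuclideanSpace ℝ (Fin n)) R), c x = 0 := by
      intro h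
      have h0 := h 0 (subset_closure (mem_ball_self hR))
      rw [c.one_of_mem_closedBall (mem_closedBall_self (half_pos hR).le)] at h0
      exact one_ne_zero h0
    have hB : (∫ z in frontier (Metric.ball (0 : EuclideanSpace ℝ (Fin n)) R),
        |c z| ∂(surf n)) = 0 := by
      rw [frontier_ball _ hR.ne']
      refine setIntegral_eq_zero_of_forall_eq_zero fun z hz => ?_
      rw [abs_eq_zero]
      refine c.zero_of_le_dist ?_
      have : dist z 0 = R := by simpa [mem_sphere_iff_norm, dist_eq_norm] using hz
      simp [this]
      exact le_rfl
    set A := ∫ z in Metric.ball (0 : EuclideanSpace ℝ (Fin n)) R, ‖gradient (⇑c) z‖ ^ 2 with hAdef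
    set C := ∫ z in Metric.ball (0 : EuclideanSpace ℝ (Fin n)) R, (c z) ^ 2 with hCdef
    have hup : ∀ m : ℝ, 0 < m →
        m * lambdam n m (Metric.ball (0 : EuclideanSpace ℝ (Fin n)) R) ≤ m * (A / C) := by
      intro m hm
      rw [Stmt17Aux.key hm]
      have := csInf_le (Stmt17Aux.TT_bdd hm.le)
        (⟨⇑c, h1, h2, rfl⟩ : (m * A + (∫ z in frontier (Metric.ball (0 : EuclideanSpace ℝ (Fin n)) R), |c z| ∂(surf n)) ^ 2) / C ∈ Stmt17Aux.TT n R m)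
      rw [hB] at this
      calc sInf (Stmt17Aux.TT n R m) ≤ (m * A + 0 ^ 2) / C := this
        _ = m * (A / C) := by rw [← mul_div_assoc]; norm_num
    have hlow : ∀ m : ℝ, 0 < m →
        (0:ℝ) ≤ m * lambdam n m (Metric.ball (0 : EuclideanSpace ℝ (Fin n)) R) := by
      intro m hm
      rw [Stmt17Aux.key hm]
      exact le_csInf (Stmt17Aux.TT_nonempty hR m) (Stmt17Aux.TT_nonneg hm.le)
    have hupper : Tendsto (fun m : ℝ => m * (A / C)) (𝓝[>] (0:ℝ)) (𝓝 0) := by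
      have : Tendsto (fun m : ℝ => m * (A / C)) (𝓝 (0:ℝ)) (𝓝 (0 * (A / C))) :=
        (continuous_id.mul continuous_const).tendsto 0
      rw [zero_mul] at this
      exact this.mono_left nhdsWithin_le_nhds
    refine tendsto_of_tendsto_of_tendsto_of_le_of_le' tendsto_const_nhds hupper ?_ ?_
    · filter_upwards [self_mem_nhdsWithin] with m hm using hlow m hm
    · filter_upwards [self_mem_nhdsWithin] with m hm using hup m hm
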